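/- arXiv:2309.04551 — 5 statements merged into one kernel-verified Lean document; each statement's English description precedes it below -/
import Mathlib

section
/- Let γ < 1/2, let n ≥ 2, and for each i ∈ ℕ define ε^(i) = γ^(i+1) / (10·log(n)·(i+1)²). Then for every k ∈ ℕ, the sum ∑_{i+j=k} ε^(i)·ε^(j) + ∑_{i+j=k-1} ε^(i)·ε^(j) is at most ε^(k)/log(n). -/
/-!
Write `ε i = a γ^i c_i` with `a = γ / (10 log n)` and `c_i = 1/(i+1)²`. The convolution
`S k = ∑_{i+j=k} c_i c_j` is at most `(2π²/3)/(k+2)²`: since `(i+1) + (j+1) = k+2`, we have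
`c_i c_j ≤ 2 (c_i + c_j)/(k+2)²`, and `∑ c_i ≤ π²/6`. The claim reduces to
`γ S k + S (k-1) ≤ 10/(k+1)²`, and the left side is at most `(1/2 + 1)(2π²/3)/(k+1)² = π²/(k+1)²`.
-/

open Finset Real

lemma sum_range_one_div_succ_sq_le (m : ℕ) :
    ∑ i ∈ range m, 1 / ((i : ℝ) + 1) ^ 2 ≤ π ^ 2 / 6 := by
  have h := sum_le_hasSum (range (m + 1)) (fun n _ ↦ by positivity) hasSum_zeta_two
  simpa [sum_range_succ'] using h

lemma one_div_sq_mul_one_div_sq_le {a b : ℝ} (ha : 0 < a) (hb : 0 < b) :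
    1 / a ^ 2 * (1 / b ^ 2) ≤ 2 / (a + b) ^ 2 * (1 / a ^ 2 + 1 / b ^ 2) := by
  rw [div_mul_div_comm, div_add_div _ _ (by positivity) (by positivity), div_mul_div_comm,
    div_le_div_iff₀ (by positivity) (by positivity)]
  nlinarith [sq_nonneg (a - b), mul_pos ha hb, sq_nonneg (a * b)]

lemma sum_antidiagonal_geom_mul {R : Type*} [CommSemiring R] (a r : R) (f : ℕ → R) (m : ℕ) :
    ∑ p ∈ antidiagonal m, a * r ^ p.1 * f p.1 * (a * r ^ p.2 * f p.2) =
      a ^ 2 * r ^ m * ∑ p ∈ antidiagonal m, f p.1 * f p.2 := by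
  rw [mul_sum]
  refine sum_congr rfl fun p hp ↦ ?_
  rw [← HasAntidiagonal.mem_antidiagonal.mp hp, pow_add]
  ring

noncomputable def invSqConv (k : ℕ) : ℝ :=
  ∑ p ∈ antidiagonal k, 1 / ((p.1 : ℝ) + 1) ^ 2 * (1 / ((p.2 : ℝ) + 1) ^ 2)

lemma invSqConv_le (k : ℕ) : invSqConv k ≤ 2 * π ^ 2 / 3 / ((k : ℝ) + 2) ^ 2 := by
  have hsum : ∀ p ∈ antidiagonal k, ((p.1 : ℝ) + 1) + ((p.2 : ℝ) + 1) = (k : ℝ) + 2 := by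
    intro p hp
    rw [← HasAntidiagonal.mem_antidiagonal.mp hp]
    push_cast
    ring
  have hswap : ∑ p ∈ antidiagonal k, 1 / ((p.2 : ℝ) + 1) ^ 2 =
      ∑ p ∈ antidiagonal k, 1 / ((p.1 : ℝ) + 1) ^ 2 :=
    Nat.sum_antidiagonal_swap (f := fun p ↦ 1 / ((p.1 : ℝ) + 1) ^ 2)
  calc invSqConv k
      ≤ ∑ p ∈ antidiagonal k,
          2 / ((k : ℝ) + 2) ^ 2 * (1 / ((p.1 : ℝ) + 1) ^ 2 + 1 / ((p.2 : ℝ) + 1) ^ 2) :=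
        sum_le_sum fun p hp ↦
          hsum p hp ▸ one_div_sq_mul_one_div_sq_le (by positivity) (by positivity)
    _ = 4 / ((k : ℝ) + 2) ^ 2 * ∑ i ∈ range (k + 1), 1 / ((i : ℝ) + 1) ^ 2 := by
        rw [← mul_sum, sum_add_distrib, hswap, Nat.sum_antidiagonal_eq_sum_range_succ_mk]
        ring
    _ ≤ 4 / ((k : ℝ) + 2) ^ 2 * (π ^ 2 / 6) := by
        gcongr
        exact sum_range_one_div_succ_sq_le _
    _ = 2 * π ^ 2 / 3 / ((k : ℝ) + 2) ^ 2 := by ring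

lemma pi_sq_lt_ten : π ^ 2 < 10 := by
  nlinarith [pi_pos, pi_lt_d2]

lemma mul_invSqConv_add_invSqConv_pred_le {γ : ℝ} (hγ0 : 0 ≤ γ) (hγ : γ ≤ 1 / 2) (k : ℕ) :
    γ * invSqConv k + (if k = 0 then 0 else invSqConv (k - 1)) ≤ 10 / ((k : ℝ) + 1) ^ 2 := by
  have hcur : γ * invSqConv k ≤ 1 / 2 * (2 * π ^ 2 / 3 / ((k : ℝ) + 1) ^ 2) := by
    refine (mul_le_mul_of_nonneg_left (invSqConv_le k) hγ0).trans ?_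
    gcongr
    linarith
  have hprev : (if k = 0 then 0 else invSqConv (k - 1)) ≤ 2 * π ^ 2 / 3 / ((k : ℝ) + 1) ^ 2 := by
    split_ifs with hk
    · positivity
    · have hk' : ((k - 1 : ℕ) : ℝ) + 2 = (k : ℝ) + 1 := by
        rw [Nat.cast_pred (Nat.pos_of_ne_zero hk)]
        ring
      simpa only [hk'] using invSqConv_le (k - 1)
  calc _ ≤ 1 / 2 * (2 * π ^ 2 / 3 / ((k : ℝ) + 1) ^ 2) + 2 * π ^ 2 / 3 / ((k : ℝ) + 1) ^ 2 :=
        add_le_add hcur hprev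
    _ = π ^ 2 / ((k : ℝ) + 1) ^ 2 := by ring
    _ ≤ 10 / ((k : ℝ) + 1) ^ 2 := by
        gcongr
        exact pi_sq_lt_ten.le

/-- Lemma 2.3 (error parameters): with `γ < 1/2` and
`ε i = γ^(i+1) / (10 · log₂ n · (i+1)²)`, for every `k` the sum
`∑_{i+j=k} ε i · ε j + ∑_{i+j=k-1} ε i · ε j` is at most `ε k / log₂ n`. -/
theorem stmt_0 (γ : ℝ) (hγpos : 0 < γ) (hγ : γ < 1 / 2) (n : ℕ) (hn : 2 ≤ n)
    (ε : ℕ → ℝ)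
    (hε : ∀ i : ℕ, ε i = γ ^ (i + 1) / (10 * Real.logb 2 n * ((i : ℝ) + 1) ^ 2))
    (k : ℕ) :
    (∑ p ∈ Finset.HasAntidiagonal.antidiagonal k, ε p.1 * ε p.2) +
      (if k = 0 then 0 else ∑ p ∈ Finset.HasAntidiagonal.antidiagonal (k - 1), ε p.1 * ε p.2) ≤
      ε k / Real.logb 2 n := by
  set L := Real.logb 2 n
  have hL : 0 < L := Real.logb_pos one_lt_two (by exact_mod_cast hn)
  set a := γ / (10 * L) with ha
  have hconv (m : ℕ) : ∑ p ∈ antidiagonal m, ε p.1 * ε p.2 = a ^ 2 * γ ^ m * invSqConv m := by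
    have hε' (i : ℕ) : ε i = a * γ ^ i * (1 / ((i : ℝ) + 1) ^ 2) := by
      rw [hε, pow_succ, ha]
      field_simp
    simp only [hε']
    exact sum_antidiagonal_geom_mul a γ (fun i : ℕ ↦ 1 / ((i : ℝ) + 1) ^ 2) m
  have hprev : (if k = 0 then 0 else a ^ 2 * γ ^ (k - 1) * invSqConv (k - 1)) =
      a ^ 2 * γ ^ k / γ * (if k = 0 then 0 else invSqConv (k - 1)) := by
    split_ifs with hk
    · simp
    · rw [pow_sub₀ γ hγpos.ne' (Nat.one_le_iff_ne_zero.mpr hk)]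
      field_simp
  simp only [hconv]
  calc _ = a ^ 2 * γ ^ k / γ * (γ * invSqConv k + (if k = 0 then 0 else invSqConv (k - 1))) := by
        rw [hprev, mul_add, ← mul_assoc, div_mul_cancel₀ _ hγpos.ne']
    _ ≤ a ^ 2 * γ ^ k / γ * (10 / ((k : ℝ) + 1) ^ 2) :=
        mul_le_mul_of_nonneg_left (mul_invSqConv_add_invSqConv_pred_le hγpos.le hγ.le k)
          (by positivity)
    _ = ε k / L := by
        rw [hε, ha]
        field_simp
        ring
end

section
/- Let M^(k)_{ℓ..r} be matrices in ℝ^{w×w} defined for dyadic intervals (ℓ,r) and k ∈ ℕ by: M^(k)_{ℓ..r} = M_r when r-ℓ=1, and otherwise M^(k)_{ℓ..r} = ∑_{i+j=k} M^(i)_{ℓ..m}·M^(j)_{m..r} − ∑_{i+j=k-1} M^(i)_{ℓ..m}·M^(j)_{m..r} where m=(ℓ+r)/2. Define Δ^(i)_{ℓ..r} = M^(i)_{ℓ..r} − M_{ℓ..r} where M_{ℓ..r} = ∏_{i=ℓ+1}^r M_i. Then for every dyadic pair (ℓ,r) with r-ℓ > 1 and m=(ℓ+r)/2: Δ^(k)_{ℓ..r}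 = ∑_{i+j=k} Δ^(i)_{ℓ..m}·Δ^(j)_{m..r} − ∑_{i+j=k-1} Δ^(i)_{ℓ..m}·Δ^(j)_{m..r} + Δ^(k)_{ℓ..m}·M_{m..r} + M_{ℓ..m}·Δ^(k)_{m..r}. -/
open Finset Matrix

/-- `(ℓ, r)` is a dyadic interval with right endpoint at most `n`:
`ℓ = i·2^t`, `r = ℓ + 2^t`. -/
def IsDyadic (n ℓ r : ℕ) : Prop :=
  ∃ i t : ℕ, ℓ = i * 2 ^ t ∧ r = ℓ + 2 ^ t ∧ r ≤ n

/-- The ordered product `M_{ℓ..r} = M_{ℓ+1} ⋯ M_r` of the matrices. -/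
noncomputable def matProd {w : ℕ} (M : ℕ → Matrix (Fin w) (Fin w) ℝ) (ℓ r : ℕ) :
    Matrix (Fin w) (Fin w) ℝ :=
  ((List.range (r - ℓ)).map fun i => M (ℓ + i + 1)).prod

/-
Write `a = A - P` and `b = B - Q` for the errors of the two halves. The defect
`C_k(A, B) = ∑_{i+j=k} A_i B_j − ∑_{i+j=k-1} A_i B_j` is bilinear, and against a constant
sequence it telescopes: `C_k(P, b) = P b_k`, `C_k(a, Q) = a_k Q`, `C_k(P, Q) = P Q`.
Expanding `C_k(a + P, b + Q)` therefore gives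
`C_k(A, B) − P Q = C_k(a, b) + a_k Q + P b_k`, and the theorem is this identity with
`P Q = M_{ℓ..m} M_{m..r} = M_{ℓ..r}`.
-/

section ConvDefect

variable {R : Type*} [Ring R]

-- The `if` makes the second sum empty at `k = 0`, where `k - 1` would truncate to `0`.
def convDefect (A B : ℕ → R) (k : ℕ) : R :=
  (∑ p ∈ antidiagonal k, A p.1 * B p.2) -
    if k = 0 then 0 else ∑ p ∈ antidiagonal (k - 1), A p.1 * B p.2

theorem convDefect_add_left (A A' B : ℕ → R) (k : ℕ) :
    convDefect (A + A') B k = convDefect A B k + convDefect A' B k := by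
  unfold convDefect
  split_ifs <;> simp only [Pi.add_apply, add_mul, sum_add_distrib] <;> abel

theorem convDefect_add_right (A B B' : ℕ → R) (k : ℕ) :
    convDefect A (B + B') k = convDefect A B k + convDefect A B' k := by
  unfold convDefect
  split_ifs <;> simp only [Pi.add_apply, mul_add, sum_add_distrib] <;> abel

theorem sum_antidiagonal_fst_sub_ite (f : ℕ → R) (k : ℕ) :
    (∑ p ∈ antidiagonal k, f p.1) - (if k = 0 then 0 else ∑ p ∈ antidiagonal (k - 1), f p.1) =
      f k := by
  rcases k with _ | k
  · simp
  · simp [Nat.sum_antidiagonal_eq_sum_range_succ_mk, sum_range_succ]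

theorem sum_antidiagonal_snd_sub_ite (f : ℕ → R) (k : ℕ) :
    (∑ p ∈ antidiagonal k, f p.2) - (if k = 0 then 0 else ∑ p ∈ antidiagonal (k - 1), f p.2) =
      f k := by
  simpa only [← Nat.sum_antidiagonal_swap (f := fun p => f p.1), Prod.fst_swap]
    using sum_antidiagonal_fst_sub_ite f k

theorem convDefect_const_left (P : R) (b : ℕ → R) (k : ℕ) :
    convDefect (fun _ => P) b k = P * b k :=
  sum_antidiagonal_snd_sub_ite (fun j => P * b j) k

theorem convDefect_const_right (a : ℕ → R) (Q : R) (k : ℕ) :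
    convDefect a (fun _ => Q) k = a k * Q :=
  sum_antidiagonal_fst_sub_ite (fun i => a i * Q) k

theorem convDefect_sub_mul (A B : ℕ → R) (P Q : R) (k : ℕ) :
    convDefect A B k - P * Q =
      convDefect (fun i => A i - P) (fun j => B j - Q) k + (A k - P) * Q + P * (B k - Q) := by
  have hA : A = (fun i => A i - P) + fun _ => P := by ext; simp
  have hB : B = (fun j => B j - Q) + fun _ => Q := by ext; simp
  conv_lhs => rw [hA, hB]
  rw [convDefect_add_left, convDefect_add_right, convDefect_add_right, convDefect_const_right,
    convDefect_const_right, convDefect_const_left]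
  abel

end ConvDefect

theorem matProd_mul_matProd {w : ℕ} (M : ℕ → Matrix (Fin w) (Fin w) ℝ) {ℓ m r : ℕ}
    (hℓm : ℓ ≤ m) (hmr : m ≤ r) :
    matProd M ℓ m * matProd M m r = matProd M ℓ r := by
  unfold matProd
  rw [show r - ℓ = (m - ℓ) + (r - m) by omega, List.range_add, List.map_append,
    List.prod_append, List.map_map]
  congr 2
  refine List.map_congr_left fun i _ => ?_
  simp only [Function.comp_apply, show ℓ + (m - ℓ + i) + 1 = m + i + 1 by omega]

theorem stmt_1_general (w n : ℕ) (M : ℕ → Matrix (Fin w) (Fin w) ℝ)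
    (Mk : ℕ → ℕ → ℕ → Matrix (Fin w) (Fin w) ℝ)
    (hrec : ∀ k ℓ r : ℕ, IsDyadic n ℓ r → 1 < r - ℓ →
      Mk k ℓ r =
        (∑ p ∈ Finset.HasAntidiagonal.antidiagonal k, Mk p.1 ℓ ((ℓ + r) / 2) * Mk p.2 ((ℓ + r) / 2) r) -
          (if k = 0 then 0 else
            ∑ p ∈ Finset.HasAntidiagonal.antidiagonal (k - 1), Mk p.1 ℓ ((ℓ + r) / 2) * Mk p.2 ((ℓ + r) / 2) r))
    (Δ : ℕ → ℕ → ℕ → Matrix (Fin w) (Fin w) ℝ)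
    (hΔ : ∀ k ℓ r : ℕ, Δ k ℓ r = Mk k ℓ r - matProd M ℓ r)
    (k ℓ r m : ℕ) (hd : IsDyadic n ℓ r) (hlen : 1 < r - ℓ) (hm : m = (ℓ + r) / 2) :
    Δ k ℓ r =
      (∑ p ∈ Finset.HasAntidiagonal.antidiagonal k, Δ p.1 ℓ m * Δ p.2 m r) -
        (if k = 0 then 0 else ∑ p ∈ Finset.HasAntidiagonal.antidiagonal (k - 1), Δ p.1 ℓ m * Δ p.2 m r) +
        Δ k ℓ m * matProd M m r + matProd M ℓ m * Δ k m r := by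
  have hsplit : matProd M ℓ m * matProd M m r = matProd M ℓ r :=
    matProd_mul_matProd M (by omega) (by omega)
  simp only [hΔ]
  rw [hrec k ℓ r hd hlen, ← hm, ← hsplit]
  exact convDefect_sub_mul (fun i => Mk i ℓ m) (fun j => Mk j m r) _ _ k

/-- Lemma 2.2: the error matrices `Δ^(k)_{ℓ..r} = M^(k)_{ℓ..r} − M_{ℓ..r}` of the
binary recursion satisfy the recursive identity. -/
theorem stmt_1 (w n : ℕ) (M : ℕ → Matrix (Fin w) (Fin w) ℝ)
    (Mk : ℕ → ℕ → ℕ → Matrix (Fin w) (Fin w) ℝ)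
    (hbase : ∀ k ℓ r : ℕ, r = ℓ + 1 → Mk k ℓ r = M r)
    (hrec : ∀ k ℓ r : ℕ, IsDyadic n ℓ r → 1 < r - ℓ →
      Mk k ℓ r =
        (∑ p ∈ Finset.HasAntidiagonal.antidiagonal k, Mk p.1 ℓ ((ℓ + r) / 2) * Mk p.2 ((ℓ + r) / 2) r) -
          (if k = 0 then 0 else
            ∑ p ∈ Finset.HasAntidiagonal.antidiagonal (k - 1), Mk p.1 ℓ ((ℓ + r) / 2) * Mk p.2 ((ℓ + r) / 2) r))
    (Δ : ℕ → ℕ → ℕ → Matrix (Fin w) (Fin w) ℝ)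
    (hΔ : ∀ k ℓ r : ℕ, Δ k ℓ r = Mk k ℓ r - matProd M ℓ r)
    (k ℓ r m : ℕ) (hd : IsDyadic n ℓ r) (hlen : 1 < r - ℓ) (hm : m = (ℓ + r) / 2) :
    Δ k ℓ r =
      (∑ p ∈ Finset.HasAntidiagonal.antidiagonal k, Δ p.1 ℓ m * Δ p.2 m r) -
        (if k = 0 then 0 else ∑ p ∈ Finset.HasAntidiagonal.antidiagonal (k - 1), Δ p.1 ℓ m * Δ p.2 m r) +
        Δ k ℓ m * matProd M m r + matProd M ℓ m * Δ k m r :=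
  stmt_1_general w n M Mk hrec Δ hΔ k ℓ r m hd hlen hm
end

section
/- For every k ∈ ℕ and every dyadic pair (ℓ,r) ∈ BS_n, the matrix M^(k)_{ℓ..r} defined by the binary recursion can be written as a signed sum ∑_{(sq,σ)∈S} σ·M^(0)_{sq} over a multiset S of pairs (sq,σ) with sq an increasing sequence ℓ = i_0 < i_1 < ... < i_h = r and σ ∈ {−1,+1}, such that |S| ≤ (r−ℓ)^{2k} and every sequence in S has length h ≤ k·log₂(r−ℓ) + 1. -/
/-!
Induction on the level `t` of the dyadic interval `(ℓ, ℓ + 2^t)`. For `k ≥ 1`, one step of the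
recursion writes `M^(k)_{ℓ..r}` as `∑_{i+j=k} − ∑_{i+j=k−1}` of products `M^(i)_{ℓ..m} M^(j)_{m..r}`.
Expanding both factors and gluing the sequences at `m` expands such a product with
`(2^t)^{2i} (2^t)^{2j} ≤ (2^t)^{2k}` terms whose sequences have at most `(i+j) t + 2 ≤ k (t+1) + 1`
steps. There are `2k + 1 ≤ 2^{2k}` products, which gives the bound `(2^{t+1})^{2k}`.
-/

open Finset Matrix

/-- Given level-0 matrices `A`, the matrix associated to an increasing sequence
`sq = (i₀, i₁, …, i_h)`: the ordered product `∏_{j=1}^h A_{i_{j-1}..i_j}`. -/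
noncomputable def seqProd {w : ℕ} (A : ℕ → ℕ → Matrix (Fin w) (Fin w) ℝ)
    (sq : List ℕ) : Matrix (Fin w) (Fin w) ℝ :=
  ((sq.zip sq.tail).map fun p => A p.1 p.2).prod

variable {w : ℕ}

lemma seqProd_cons_cons (A : ℕ → ℕ → Matrix (Fin w) (Fin w) ℝ) (a b : ℕ) (l : List ℕ) :
    seqProd A (a :: b :: l) = A a b * seqProd A (b :: l) := by
  simp [seqProd]

lemma seqProd_singleton (A : ℕ → ℕ → Matrix (Fin w) (Fin w) ℝ) (a : ℕ) : seqProd A [a] = 1 := by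
  simp [seqProd]

lemma seqProd_append_cons (A : ℕ → ℕ → Matrix (Fin w) (Fin w) ℝ) (l : List ℕ) (m : ℕ)
    (u : List ℕ) : seqProd A (l ++ m :: u) = seqProd A (l ++ [m]) * seqProd A (m :: u) := by
  induction l with
  | nil => simp [seqProd_singleton]
  | cons a l ih =>
    cases l with
    | nil => simp [seqProd_cons_cons, seqProd_singleton]
    | cons b l =>
      simp only [List.cons_append, seqProd_cons_cons] at ih ⊢
      rw [ih, mul_assoc]

lemma seqProd_append_tail (A : ℕ → ℕ → Matrix (Fin w) (Fin w) ℝ) {l₁ l₂ : List ℕ} {m : ℕ}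
    (h₁ : l₁.getLast? = some m) (h₂ : l₂.head? = some m) :
    seqProd A (l₁ ++ l₂.tail) = seqProd A l₁ * seqProd A l₂ := by
  obtain ⟨init, rfl⟩ := List.getLast?_eq_some_iff.mp h₁
  obtain ⟨u, rfl⟩ := List.head?_eq_some_iff.mp h₂
  simpa using seqProd_append_cons A init m u

def IsIncSeq (ℓ r : ℕ) (l : List ℕ) : Prop :=
  l.IsChain (· < ·) ∧ l.head? = some ℓ ∧ l.getLast? = some r

lemma IsIncSeq.append_tail {ℓ m r : ℕ} {l₁ l₂ : List ℕ} (h₁ : IsIncSeq ℓ m l₁)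
    (h₂ : IsIncSeq m r l₂) : IsIncSeq ℓ r (l₁ ++ l₂.tail) := by
  obtain ⟨hc₁, hh₁, hl₁⟩ := h₁
  obtain ⟨hc₂, hh₂, hl₂⟩ := h₂
  obtain ⟨init, rfl⟩ := List.getLast?_eq_some_iff.mp hl₁
  obtain ⟨u, rfl⟩ := List.head?_eq_some_iff.mp hh₂
  refine ⟨hc₁.append_overlap hc₂ (List.cons_ne_nil m []), ?_, ?_⟩
  · simpa using hh₁
  · cases u with
    | nil => simpa using hl₂
    | cons a u => simpa [List.getLast?_append] using hl₂

structure IsSignedExpansion (A : ℕ → ℕ → Matrix (Fin w) (Fin w) ℝ) (ℓ r L : ℕ)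
    (X : Matrix (Fin w) (Fin w) ℝ) (S : Multiset (List ℕ × ℝ)) : Prop where
  sign : ∀ p ∈ S, p.2 = 1 ∨ p.2 = -1
  isIncSeq : ∀ p ∈ S, IsIncSeq ℓ r p.1
  length_le : ∀ p ∈ S, p.1.length - 1 ≤ L
  eq_sum : X = (S.map fun p => p.2 • seqProd A p.1).sum

namespace IsSignedExpansion

variable {A : ℕ → ℕ → Matrix (Fin w) (Fin w) ℝ} {ℓ m r L L₁ L₂ : ℕ}
  {X Y : Matrix (Fin w) (Fin w) ℝ} {S T : Multiset (List ℕ × ℝ)}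

lemma single (A : ℕ → ℕ → Matrix (Fin w) (Fin w) ℝ) (hℓr : ℓ < r) :
    IsSignedExpansion A ℓ r 1 (A ℓ r) {([ℓ, r], 1)} where
  sign := by simp
  isIncSeq := by simp [IsIncSeq, hℓr]
  length_le := by simp
  eq_sum := by simp [seqProd]

lemma zero (A : ℕ → ℕ → Matrix (Fin w) (Fin w) ℝ) (ℓ r L : ℕ) :
    IsSignedExpansion A ℓ r L 0 0 where
  sign := by simp
  isIncSeq := by simp
  length_le := by simp
  eq_sum := by simp

lemma add (hX : IsSignedExpansion A ℓ r L X S) (hY : IsSignedExpansion A ℓ r L Y T) :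
    IsSignedExpansion A ℓ r L (X + Y) (S + T) where
  sign p hp := (Multiset.mem_add.mp hp).elim (hX.sign p) (hY.sign p)
  isIncSeq p hp := (Multiset.mem_add.mp hp).elim (hX.isIncSeq p) (hY.isIncSeq p)
  length_le p hp := (Multiset.mem_add.mp hp).elim (hX.length_le p) (hY.length_le p)
  eq_sum := by rw [hX.eq_sum, hY.eq_sum, Multiset.map_add, Multiset.sum_add]

lemma neg (hX : IsSignedExpansion A ℓ r L X S) :
    IsSignedExpansion A ℓ r L (-X) (S.map fun p => (p.1, -p.2)) where
  sign := by
    simp only [Multiset.mem_map]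
    rintro _ ⟨p, hp, rfl⟩
    rcases hX.sign p hp with hp | hp <;> simp [hp]
  isIncSeq := by
    simp only [Multiset.mem_map]
    rintro _ ⟨p, hp, rfl⟩
    exact hX.isIncSeq p hp
  length_le := by
    simp only [Multiset.mem_map]
    rintro _ ⟨p, hp, rfl⟩
    exact hX.length_le p hp
  eq_sum := by simp [hX.eq_sum, Multiset.map_map, Multiset.sum_map_neg]

lemma mul (hX : IsSignedExpansion A ℓ m L₁ X S) (hY : IsSignedExpansion A m r L₂ Y T) :
    IsSignedExpansion A ℓ r (L₁ + L₂) (X * Y)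
      (S.bind fun p => T.map fun q => (p.1 ++ q.1.tail, p.2 * q.2)) where
  sign := by
    simp only [Multiset.mem_bind, Multiset.mem_map]
    rintro _ ⟨p, hp, q, hq, rfl⟩
    rcases hX.sign p hp with hp | hp <;> rcases hY.sign q hq with hq | hq <;> simp [hp, hq]
  isIncSeq := by
    simp only [Multiset.mem_bind, Multiset.mem_map]
    rintro _ ⟨p, hp, q, hq, rfl⟩
    exact (hX.isIncSeq p hp).append_tail (hY.isIncSeq q hq)
  length_le := by
    simp only [Multiset.mem_bind, Multiset.mem_map]
    rintro _ ⟨p, hp, q, hq, rfl⟩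
    have := hX.length_le p hp
    have := hY.length_le q hq
    simp only [List.length_append, List.length_tail]
    omega
  eq_sum := by
    rw [hX.eq_sum, hY.eq_sum, Multiset.map_bind, Multiset.sum_bind, ← Multiset.sum_map_mul_right]
    refine congrArg Multiset.sum (Multiset.map_congr rfl fun p hp => ?_)
    rw [← Multiset.sum_map_mul_left, Multiset.map_map]
    refine congrArg Multiset.sum (Multiset.map_congr rfl fun q hq => ?_)
    rw [Function.comp_apply, smul_mul_smul_comm,
      seqProd_append_tail A (hX.isIncSeq p hp).2.2 (hY.isIncSeq q hq).2.1]

lemma mono (hX : IsSignedExpansion A ℓ r L₁ X S) (hL : L₁ ≤ L₂) :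
    IsSignedExpansion A ℓ r L₂ X S :=
  { hX with length_le := fun p hp => (hX.length_le p hp).trans hL }

end IsSignedExpansion

def HasSignedExpansion (A : ℕ → ℕ → Matrix (Fin w) (Fin w) ℝ) (ℓ r L N : ℕ)
    (X : Matrix (Fin w) (Fin w) ℝ) : Prop :=
  ∃ S, IsSignedExpansion A ℓ r L X S ∧ Multiset.card S ≤ N

namespace HasSignedExpansion

variable {A : ℕ → ℕ → Matrix (Fin w) (Fin w) ℝ} {ℓ m r L L₁ L₂ N N₁ N₂ : ℕ}
  {X Y : Matrix (Fin w) (Fin w) ℝ}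

lemma single (A : ℕ → ℕ → Matrix (Fin w) (Fin w) ℝ) (hℓr : ℓ < r) :
    HasSignedExpansion A ℓ r 1 1 (A ℓ r) :=
  ⟨_, .single A hℓr, by simp⟩

lemma sub (hX : HasSignedExpansion A ℓ r L N₁ X) (hY : HasSignedExpansion A ℓ r L N₂ Y) :
    HasSignedExpansion A ℓ r L (N₁ + N₂) (X - Y) := by
  obtain ⟨S, hS, hSc⟩ := hX
  obtain ⟨T, hT, hTc⟩ := hY
  refine ⟨_, sub_eq_add_neg X Y ▸ hS.add hT.neg, ?_⟩
  simpa using add_le_add hSc hTc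

lemma mul (hX : HasSignedExpansion A ℓ m L₁ N₁ X) (hY : HasSignedExpansion A m r L₂ N₂ Y) :
    HasSignedExpansion A ℓ r (L₁ + L₂) (N₁ * N₂) (X * Y) := by
  obtain ⟨S, hS, hSc⟩ := hX
  obtain ⟨T, hT, hTc⟩ := hY
  refine ⟨_, hS.mul hT, ?_⟩
  simpa [Function.comp_def, mul_comm] using Nat.mul_le_mul hSc hTc

lemma sum {ι : Type*} (s : Finset ι) {X : ι → Matrix (Fin w) (Fin w) ℝ}
    (hX : ∀ i ∈ s, HasSignedExpansion A ℓ r L N (X i)) :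
    HasSignedExpansion A ℓ r L (s.card * N) (∑ i ∈ s, X i) := by
  classical
  induction s using Finset.induction_on with
  | empty => exact ⟨0, .zero A ℓ r L, by simp⟩
  | insert i s hi ih =>
    obtain ⟨S, hS, hSc⟩ := hX i (Finset.mem_insert_self i s)
    obtain ⟨T, hT, hTc⟩ := ih fun j hj => hX j (Finset.mem_insert_of_mem hj)
    refine ⟨S + T, ?_, ?_⟩
    · rw [Finset.sum_insert hi]
      exact hS.add hT
    · rw [Multiset.card_add, Finset.card_insert_of_notMem hi, add_mul, one_mul, add_comm]
      exact add_le_add hTc hSc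

lemma mono (hX : HasSignedExpansion A ℓ r L₁ N₁ X) (hL : L₁ ≤ L₂) (hN : N₁ ≤ N₂) :
    HasSignedExpansion A ℓ r L₂ N₂ X :=
  let ⟨S, hS, hSc⟩ := hX
  ⟨S, hS.mono hL, hSc.trans hN⟩

end HasSignedExpansion

theorem hasSignedExpansion_of_dyadic {n : ℕ} {Mk : ℕ → ℕ → ℕ → Matrix (Fin w) (Fin w) ℝ}
    (hbase : ∀ k ℓ, Mk k ℓ (ℓ + 1) = Mk 0 ℓ (ℓ + 1))
    (hrec : ∀ k ℓ r, IsDyadic n ℓ r → 1 < r - ℓ →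
      Mk k ℓ r = (∑ p ∈ antidiagonal k, Mk p.1 ℓ ((ℓ + r) / 2) * Mk p.2 ((ℓ + r) / 2) r) -
        if k = 0 then 0 else
          ∑ p ∈ antidiagonal (k - 1), Mk p.1 ℓ ((ℓ + r) / 2) * Mk p.2 ((ℓ + r) / 2) r)
    (t : ℕ) : ∀ k i ℓ, ℓ = i * 2 ^ t → ℓ + 2 ^ t ≤ n →
      HasSignedExpansion (Mk 0) ℓ (ℓ + 2 ^ t) (k * t + 1) ((2 ^ t) ^ (2 * k))
        (Mk k ℓ (ℓ + 2 ^ t)) := by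
  induction t with
  | zero =>
    intro k i ℓ _ _
    rw [pow_zero, hbase]
    simpa using HasSignedExpansion.single (Mk 0) (Nat.lt_succ_self ℓ)
  | succ t ih =>
    intro k i ℓ hℓ hn
    rcases Nat.eq_zero_or_pos k with rfl | hk
    · simpa using HasSignedExpansion.single (Mk 0) (Nat.lt_add_of_pos_right (Nat.two_pow_pos _))
    have h2 : 2 ^ (t + 1) = 2 ^ t + 2 ^ t := by rw [pow_succ]; ring
    have hpos := Nat.two_pow_pos t
    have hprod : ∀ a b, a + b ≤ k →
        HasSignedExpansion (Mk 0) ℓ (ℓ + 2 ^ (t + 1)) (k * (t + 1) + 1) ((2 ^ t) ^ (2 * k))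
          (Mk a ℓ (ℓ + 2 ^ t) * Mk b (ℓ + 2 ^ t) (ℓ + 2 ^ (t + 1))) := by
      intro a b hab
      rw [h2, ← add_assoc]
      refine ((ih a (2 * i) ℓ (by rw [hℓ, pow_succ]; ring) (by omega)).mul
        (ih b (2 * i + 1) (ℓ + 2 ^ t) (by rw [hℓ, pow_succ]; ring) (by omega))).mono ?_ ?_
      · nlinarith
      · rw [← pow_add, ← mul_add]
        exact Nat.pow_le_pow_right hpos (by omega)
    have hmid : (ℓ + (ℓ + 2 ^ (t + 1))) / 2 = ℓ + 2 ^ t := by omega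
    rw [hrec k ℓ (ℓ + 2 ^ (t + 1)) ⟨i, t + 1, hℓ, rfl, hn⟩ (by omega), if_neg hk.ne', hmid]
    refine ((HasSignedExpansion.sum _ fun p hp => hprod p.1 p.2 ?_).sub
      (HasSignedExpansion.sum _ fun p hp => hprod p.1 p.2 ?_)).mono le_rfl ?_
    · rw [mem_antidiagonal.mp hp]
    · have := mem_antidiagonal.mp hp
      omega
    · rw [Nat.card_antidiagonal, Nat.card_antidiagonal, Nat.sub_add_cancel hk, ← add_mul, pow_succ,
        mul_pow, mul_comm]
      have : 2 * k < 2 ^ (2 * k) := Nat.lt_two_pow_self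
      exact Nat.mul_le_mul_left _ (by omega)

/-- Lemma 3.8 (expansion): `M^(k)_{ℓ..r}` is a signed sum of at most `(r−ℓ)^{2k}`
products `M^(0)_{sq}` over increasing sequences from `ℓ` to `r` of length at most
`k·log₂(r−ℓ) + 1`. -/
theorem stmt_10 (w n : ℕ) (M : ℕ → Matrix (Fin w) (Fin w) ℝ)
    (Mk : ℕ → ℕ → ℕ → Matrix (Fin w) (Fin w) ℝ)
    (hbase : ∀ k ℓ r : ℕ, r = ℓ + 1 → Mk k ℓ r = M r)
    (hrec : ∀ k ℓ r : ℕ, IsDyadic n ℓ r → 1 < r - ℓ →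
      Mk k ℓ r =
        (∑ p ∈ Finset.HasAntidiagonal.antidiagonal k, Mk p.1 ℓ ((ℓ + r) / 2) * Mk p.2 ((ℓ + r) / 2) r) -
          (if k = 0 then 0 else
            ∑ p ∈ Finset.HasAntidiagonal.antidiagonal (k - 1),
              Mk p.1 ℓ ((ℓ + r) / 2) * Mk p.2 ((ℓ + r) / 2) r))
    (k ℓ r : ℕ) (hd : IsDyadic n ℓ r) :
    ∃ S : Multiset (List ℕ × ℝ),
      (∀ p ∈ S, p.2 = 1 ∨ p.2 = -1) ∧
      (∀ p ∈ S, p.1.Chain' (· < ·) ∧ p.1.head? = some ℓ ∧ p.1.getLast? = some r) ∧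
      Mk k ℓ r = (S.map fun p => p.2 • seqProd (Mk 0) p.1).sum ∧
      S.card ≤ (r - ℓ) ^ (2 * k) ∧
      ∀ p ∈ S, p.1.length - 1 ≤ k * Nat.log 2 (r - ℓ) + 1 := by
  obtain ⟨i, t, hℓ, rfl, hn⟩ := hd
  have hbase_succ (k ℓ : ℕ) : Mk k ℓ (ℓ + 1) = Mk 0 ℓ (ℓ + 1) := by
    rw [hbase k ℓ _ rfl, hbase 0 ℓ _ rfl]
  obtain ⟨S, hS, hcard⟩ := hasSignedExpansion_of_dyadic hbase_succ hrec t k i ℓ hℓ hn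
  rw [Nat.add_sub_cancel_left, Nat.log_pow Nat.one_lt_two]
  exact ⟨S, hS.sign, hS.isIncSeq, hS.eq_sum, hcard, hS.length_le⟩
end

section
/- If m' = LCA(ℓ, m) and m = LCA(ℓ, r') for some r' > m > m' > ℓ, and m' = c'·2^{t'}, m = c·2^{t} with c', c odd, then t > t' and m = m' + 2^{t'}. In particular (m', m) is a dyadic interval. -/
/-- `(a, b)` is a dyadic interval: `b = a + 2^s` and `2^s ∣ a` for some `s`. -/
def IsDyadicPair (a b : ℕ) : Prop :=
  ∃ s : ℕ, b = a + 2 ^ s ∧ 2 ^ s ∣ a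

/-- `m` is `LCA(ℓ, r)`: `m` is a multiple of `2^t` lying strictly in `(ℓ,r)`, where `t`
is the largest integer such that `(ℓ,r)` contains a multiple of `2^t`. -/
def IsLCA (ℓ r m : ℕ) : Prop :=
  ∃ t : ℕ, (ℓ < m ∧ m < r ∧ 2 ^ t ∣ m) ∧
    ∀ t' m' : ℕ, ℓ < m' → m' < r → 2 ^ t' ∣ m' → t' ≤ t

lemma pow_le_of_dvd_odd_mul {a b c : ℕ} (hc : Odd c) (h : 2 ^ a ∣ c * 2 ^ b) : a ≤ b := by
  by_contra hab
  push_neg at hab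
  have h2 : 2 ^ (b + 1) ∣ c * 2 ^ b := dvd_trans (pow_dvd_pow 2 hab) h
  rw [pow_succ, mul_comm c] at h2
  have h3 : 2 ∣ c := (Nat.mul_dvd_mul_iff_left (pow_pos two_pos b)).mp h2
  obtain ⟨j, hj⟩ := hc
  omega

/-- If `m' = LCA(ℓ, m)` and `m = LCA(ℓ, r')` with `ℓ < m' < m < r'`, and
`m' = c'·2^{t'}`, `m = c·2^t` with `c', c` odd, then `t' < t` and `m = m' + 2^{t'}`;
in particular `(m', m)` is a dyadic interval. -/
theorem stmt_12 (ℓ m' m r' c' c t' t : ℕ)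
    (h1 : ℓ < m') (h2 : m' < m) (h3 : m < r')
    (hm' : IsLCA ℓ m m') (hm : IsLCA ℓ r' m)
    (hc' : Odd c') (hc : Odd c)
    (he' : m' = c' * 2 ^ t') (he : m = c * 2 ^ t) :
    t' < t ∧ m = m' + 2 ^ t' ∧ IsDyadicPair m' m := by
  obtain ⟨τ', ⟨hA1, hA2, hA3⟩, hmax'⟩ := hm'
  obtain ⟨τ, ⟨hB1, hB2, hB3⟩, hmax⟩ := hm
  have hτ't' : τ' ≤ t' := pow_le_of_dvd_odd_mul hc' (he' ▸ hA3)
  have hτt : τ ≤ t := pow_le_of_dvd_odd_mul hc (he ▸ hB3)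
  have hdvdm' : 2 ^ t' ∣ m' := ⟨c', by rw [he']; ring⟩
  have ht'τ : t' ≤ τ := hmax t' m' h1 (h2.trans h3) hdvdm'
  have ht't : t' ≤ t := ht'τ.trans hτt
  obtain ⟨k, hk⟩ := hc'
  have hdvd'' : 2 ^ (t' + 1) ∣ m' + 2 ^ t' := ⟨k + 1, by rw [he', hk]; ring⟩
  have hle : m ≤ m' + 2 ^ t' := by
    by_contra hlt
    push_neg at hlt
    have := hmax' (t' + 1) (m' + 2 ^ t') (by omega) hlt hdvd''
    omega
  have hdvdm : 2 ^ t' ∣ m := he ▸ Dvd.dvd.mul_left (pow_dvd_pow 2 ht't) c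
  have hge : m' + 2 ^ t' ≤ m := by
    have hd : 2 ^ t' ∣ m - m' := Nat.dvd_sub hdvdm hdvdm'
    have hpos : 0 < m - m' := by omega
    have := Nat.le_of_dvd hpos hd
    omega
  have heq : m = m' + 2 ^ t' := le_antisymm hle hge
  have htt : t' < t := by
    rcases lt_or_eq_of_le ht't with h | h
    · exact h
    · exfalso
      have hcc' : c * 2 ^ t = (c' + 1) * 2 ^ t := by rw [← he, heq, he', h]; ring
      have hcc : c = c' + 1 := Nat.eq_of_mul_eq_mul_right (pow_pos two_pos t) hcc'
      obtain ⟨j, hj⟩ := hc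
      omega
  exact ⟨htt, heq, ⟨t', heq, hdvdm'⟩⟩
end

section
/- For every ℓ < r and every vector y ∈ ℝ^w, the total weight of a width-w ROBP between layers ℓ and r satisfies W(ℓ,r,y) ≤ w²·‖y‖_∞, provided the program is regular. -/
open Finset Matrix

variable {w : ℕ}

/-- The random walk matrix `M_i = (M_i(0) + M_i(1))/2` of the `i`-th transition function. -/
noncomputable def rwMat (B : ℕ → Fin w → Bool → Fin w) (i : ℕ) :
    Matrix (Fin w) (Fin w) ℝ :=
  fun u v => ((if B i u false = v then (1 : ℝ) else 0) + (if B i u true = v then 1 else 0)) / 2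

/-- The random walk matrix `M_{ℓ..r} = M_{ℓ+1} ⋯ M_r` (identity when `ℓ = r`). -/
noncomputable def rwProd (B : ℕ → Fin w → Bool → Fin w) (ℓ r : ℕ) :
    Matrix (Fin w) (Fin w) ℝ :=
  ((List.range (r - ℓ)).map fun i => rwMat B (ℓ + i + 1)).prod

/-- The layer-`i` weight on `y`. -/
noncomputable def layerWeight (B : ℕ → Fin w → Bool → Fin w) (i : ℕ) (y : Fin w → ℝ) : ℝ :=
  ∑ u : Fin w, ∑ b : Bool, |(rwMat B i *ᵥ y) u - y (B i u b)|

/-- The total weight between layers `ℓ` and `r` on `y`. -/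
noncomputable def totalWeight (B : ℕ → Fin w → Bool → Fin w) (ℓ r : ℕ) (y : Fin w → ℝ) : ℝ :=
  ∑ i ∈ Finset.Ioc ℓ r, layerWeight B i (rwProd B i r *ᵥ y)

lemma abs_midpoint (a b : ℝ) : |(a+b)/2 - a| + |(a+b)/2 - b| = |a - b| := by
  have h1 : (a+b)/2 - a = (b-a)/2 := by ring
  have h2 : (a+b)/2 - b = (a-b)/2 := by ring
  rw [h1, h2, abs_div, abs_div, abs_sub_comm b a]
  norm_num

lemma sum01 (f : Fin w → ℝ) (h : ∀ u, f u = 0 ∨ f u = 1) :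
    ∑ u : Fin w, ∑ v : Fin w, |f u - f v|
      = 2 * (∑ u, f u) * ((w : ℝ) - ∑ u, f u) := by
  have hpt : ∀ u v : Fin w, |f u - f v| = f u + f v - 2 * (f u * f v) := by
    intro u v
    rcases h u with h1 | h1 <;> rcases h v with h2 | h2 <;> rw [h1, h2] <;> norm_num
  calc ∑ u : Fin w, ∑ v : Fin w, |f u - f v|
      = ∑ u : Fin w, ∑ v : Fin w, (f u + f v - 2 * (f u * f v)) := by
        exact Finset.sum_congr rfl fun u _ => Finset.sum_congr rfl fun v _ => hpt u v
    _ = 2 * (∑ u, f u) * ((w : ℝ) - ∑ u, f u) := by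
        simp only [Finset.sum_add_distrib, Finset.sum_sub_distrib, Finset.sum_const,
          Finset.card_univ, Fintype.card_fin, nsmul_eq_mul, ← Finset.mul_sum, ← Finset.sum_mul]
        ring

lemma keyD (g : Fin w → Bool → Fin w)
    (hreg : ∀ v : Fin w,
      (Finset.univ.filter fun p : Fin w × Bool => g p.1 p.2 = v).card = 2)
    (χ : Fin w → ℝ) (h01 : ∀ u, χ u = 0 ∨ χ u = 1) :
    (∑ u : Fin w, |χ (g u false) - χ (g u true)|) +
      ∑ u : Fin w, ∑ v : Fin w,
        |(χ (g u false) + χ (g u true))/2 - (χ (g v false) + χ (g v true))/2|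
      ≤ ∑ u : Fin w, ∑ v : Fin w, |χ u - χ v| := by
  set x : Fin w → ℝ := fun u => χ (g u false) with hx
  set y : Fin w → ℝ := fun u => χ (g u true) with hy
  have hx01 : ∀ u, x u = 0 ∨ x u = 1 := fun u => h01 _
  have hy01 : ∀ u, y u = 0 ∨ y u = 1 := fun u => h01 _
  set p : Fin w → ℝ := fun u => x u + y u - x u * y u with hp
  set q : Fin w → ℝ := fun u => x u * y u with hq
  have hp01 : ∀ u, p u = 0 ∨ p u = 1 := by
    intro u; rcases hx01 u with h1 | h1 <;> rcases hy01 u with h2 | h2 <;>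
      simp [hp, h1, h2]
  have hq01 : ∀ u, q u = 0 ∨ q u = 1 := by
    intro u; rcases hx01 u with h1 | h1 <;> rcases hy01 u with h2 | h2 <;>
      simp [hq, h1, h2]
  -- |x - y| = p - q pointwise
  have hxy : ∀ u, |x u - y u| = p u - q u := by
    intro u; rcases hx01 u with h1 | h1 <;> rcases hy01 u with h2 | h2 <;>
      simp [hp, hq, h1, h2] <;> norm_num
  set P := ∑ u, p u with hP
  set Q := ∑ u, q u with hQ
  set c := ∑ u, χ u with hc
  -- regularity: sum of x+y = 2c
  have hsum : ∑ u, (x u + y u) = 2 * c := by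
    have h1 : ∑ u, (x u + y u) = ∑ u : Fin w, ∑ b : Bool, χ (g u b) := by
      apply Finset.sum_congr rfl; intro u _
      simp [hx, hy, Fintype.sum_bool]; ring
    have h2 : ∑ u : Fin w, ∑ b : Bool, χ (g u b)
        = ∑ pr ∈ (Finset.univ : Finset (Fin w × Bool)), χ (g pr.1 pr.2) := by
      rw [← Finset.sum_product']
      rfl
    have h3 : ∑ pr ∈ (Finset.univ : Finset (Fin w × Bool)), χ (g pr.1 pr.2)
        = ∑ v : Fin w, ∑ pr ∈ Finset.univ.filter (fun pr : Fin w × Bool => g pr.1 pr.2 = v),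
            χ (g pr.1 pr.2) := by
      rw [Finset.sum_fiberwise_of_maps_to (fun pr _ => Finset.mem_univ (g pr.1 pr.2))]
    have h4 : ∀ v : Fin w,
        (∑ pr ∈ Finset.univ.filter (fun pr : Fin w × Bool => g pr.1 pr.2 = v),
          χ (g pr.1 pr.2)) = 2 * χ v := by
      intro v
      have : ∀ pr ∈ Finset.univ.filter (fun pr : Fin w × Bool => g pr.1 pr.2 = v),
          χ (g pr.1 pr.2) = χ v := by
        intro pr hpr
        rw [(Finset.mem_filter.1 hpr).2]
      rw [Finset.sum_congr rfl this, Finset.sum_const, hreg v]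
      simp [nsmul_eq_mul]
    rw [h1, h2, h3, Finset.sum_congr rfl (fun v _ => h4 v), ← Finset.mul_sum, hc]
  have hPQ : P + Q = 2 * c := by
    rw [hP, hQ, ← Finset.sum_add_distrib, ← hsum]
    apply Finset.sum_congr rfl; intro u _; simp [hp, hq]
  -- term1
  have hterm1 : (∑ u : Fin w, |χ (g u false) - χ (g u true)|) = P - Q := by
    rw [hP, hQ, ← Finset.sum_sub_distrib]
    exact Finset.sum_congr rfl fun u _ => hxy u
  -- term2
  have hterm2 : ∑ u : Fin w, ∑ v : Fin w,
        |(χ (g u false) + χ (g u true))/2 - (χ (g v false) + χ (g v true))/2|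
      ≤ P * ((w:ℝ) - P) + Q * ((w:ℝ) - Q) := by
    have hpt : ∀ u v : Fin w,
        |(χ (g u false) + χ (g u true))/2 - (χ (g v false) + χ (g v true))/2|
          ≤ (|p u - p v| + |q u - q v|) / 2 := by
      intro u v
      have he : (χ (g u false) + χ (g u true))/2 - (χ (g v false) + χ (g v true))/2
          = ((p u - p v) + (q u - q v)) / 2 := by
        simp only [hp, hq, hx, hy]; ring
      rw [he, abs_div]
      have := abs_add_le (p u - p v) (q u - q v)
      rw [abs_of_pos (by norm_num : (0:ℝ) < 2)]
      linarith
    calc ∑ u : Fin w, ∑ v : Fin w,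
          |(χ (g u false) + χ (g u true))/2 - (χ (g v false) + χ (g v true))/2|
        ≤ ∑ u : Fin w, ∑ v : Fin w, (|p u - p v| + |q u - q v|) / 2 := by
          apply Finset.sum_le_sum; intro u _
          apply Finset.sum_le_sum; intro v _
          exact hpt u v
      _ = ((∑ u : Fin w, ∑ v : Fin w, |p u - p v|)
            + ∑ u : Fin w, ∑ v : Fin w, |q u - q v|) / 2 := by
          simp only [← Finset.sum_div, Finset.sum_add_distrib]
      _ = P * ((w:ℝ) - P) + Q * ((w:ℝ) - Q) := by
          rw [sum01 p hp01, sum01 q hq01, ← hP, ← hQ]; ring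
  -- RHS
  have hrhs : ∑ u : Fin w, ∑ v : Fin w, |χ u - χ v| = 2 * c * ((w:ℝ) - c) := by
    rw [sum01 χ h01, hc]
  -- integrality: P - Q = 2 * m for a natural m
  have hd0 : 0 ≤ P - Q := by
    rw [← hterm1]; positivity
  have hQc : Q ≤ c := by linarith
  -- c and Q are casts of naturals
  obtain ⟨cn, hcn⟩ : ∃ n : ℕ, c = (n : ℝ) := by
    refine ⟨(Finset.univ.filter fun u : Fin w => χ u = 1).card, ?_⟩
    rw [hc]
    rw [← Finset.sum_boole]
    apply Finset.sum_congr rfl; intro u _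
    rcases h01 u with h1 | h1 <;> simp [h1]
  obtain ⟨qn, hqn⟩ : ∃ n : ℕ, Q = (n : ℝ) := by
    refine ⟨(Finset.univ.filter fun u : Fin w => q u = 1).card, ?_⟩
    rw [hQ, ← Finset.sum_boole]
    apply Finset.sum_congr rfl; intro u _
    rcases hq01 u with h1 | h1 <;> simp [h1]
  have hqcn : qn ≤ cn := by
    have : (qn : ℝ) ≤ (cn : ℝ) := by rw [← hqn, ← hcn]; exact hQc
    exact_mod_cast this
  set m : ℕ := cn - qn with hm
  have hdm : P - Q = 2 * (m : ℝ) := by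
    have : (m : ℝ) = c - Q := by
      rw [hm, Nat.cast_sub hqcn, ← hcn, ← hqn]
    rw [this]; linarith
  have hmsq : (m : ℝ) ≤ (m : ℝ) ^ 2 := by
    have : m ≤ m ^ 2 := Nat.le_self_pow two_ne_zero m
    exact_mod_cast this
  rw [hterm1, hrhs]
  nlinarith [hterm2, hPQ, hdm, hmsq]

lemma decomp (z : Fin w → ℝ) (hnc : ∃ u v : Fin w, z u ≠ z v) :
    ∃ (z' χ : Fin w → ℝ) (δ : ℝ), 0 < δ ∧
      (∀ u, χ u = 0 ∨ χ u = 1) ∧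
      (∀ u, z u = z' u + δ * χ u) ∧
      (∀ u v, |z u - z v| = |z' u - z' v| + δ * |χ u - χ v|) ∧
      (Finset.univ.image z').card < (Finset.univ.image z).card ∧
      (∀ hi, (∀ u, z u ≤ hi) → ∀ u, z' u ≤ hi - δ) ∧
      (∀ lo, (∀ u, lo ≤ z u) → ∀ u, lo ≤ z' u) := by
  obtain ⟨u₀, v₀, hne⟩ := hnc
  have himg : (Finset.univ.image z).Nonempty :=
    ⟨z u₀, Finset.mem_image_of_mem _ (Finset.mem_univ _)⟩
  set Mx := (Finset.univ.image z).max' himg with hMxdef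
  have hub : ∀ u, z u ≤ Mx :=
    fun u => Finset.le_max' _ _ (Finset.mem_image_of_mem _ (Finset.mem_univ _))
  have hE : ((Finset.univ.image z).erase Mx).Nonempty := by
    rcases eq_or_ne (z u₀) Mx with h | h
    · exact ⟨z v₀, Finset.mem_erase.2 ⟨fun hc => hne (by rw [h, hc]),
        Finset.mem_image_of_mem _ (Finset.mem_univ _)⟩⟩
    · exact ⟨z u₀, Finset.mem_erase.2 ⟨h, Finset.mem_image_of_mem _ (Finset.mem_univ _)⟩⟩
  set V₂ := ((Finset.univ.image z).erase Mx).max' hE with hV₂def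
  have hV₂mem := Finset.max'_mem _ hE
  have hV₂ne : V₂ ≠ Mx := (Finset.mem_erase.1 hV₂mem).1
  have hV₂img : V₂ ∈ Finset.univ.image z := (Finset.mem_erase.1 hV₂mem).2
  obtain ⟨u₂, _, hu₂⟩ := Finset.mem_image.1 hV₂img
  have hV₂lt : V₂ < Mx := lt_of_le_of_ne (hu₂ ▸ hub u₂) hV₂ne
  have hEle : ∀ u, z u ≠ Mx → z u ≤ V₂ := by
    intro u h
    exact Finset.le_max' _ _ (Finset.mem_erase.2
      ⟨h, Finset.mem_image_of_mem _ (Finset.mem_univ _)⟩)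
  obtain ⟨uM, _, huM⟩ := Finset.mem_image.1 (Finset.max'_mem _ himg)
  refine ⟨fun u => z u - (Mx - V₂) * (if z u = Mx then (1:ℝ) else 0),
    fun u => if z u = Mx then (1:ℝ) else 0, Mx - V₂, by linarith, ?_, ?_, ?_, ?_, ?_, ?_⟩
  · intro u; by_cases h : z u = Mx <;> simp [h]
  · intro u; ring
  · -- additivity of abs
    set χ : Fin w → ℝ := fun u => if z u = Mx then (1:ℝ) else 0 with hχ
    set z' : Fin w → ℝ := fun u => z u - (Mx - V₂) * χ u with hz'
    show ∀ u v, |z u - z v| = |z' u - z' v| + (Mx - V₂) * |χ u - χ v|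
    have hz'le : ∀ u, z' u ≤ V₂ := by
      intro u; by_cases h : z u = Mx
      · simp [hz', hχ, h]
      · simp [hz', hχ, h]; exact hEle u h
    have hmono : ∀ u v, z v ≤ z u → χ v ≤ χ u ∧ z' v ≤ z' u := by
      intro u v hle
      have hχm : χ v ≤ χ u := by
        by_cases h : z v = Mx
        · have h2 : z u = Mx := le_antisymm (hub u) (h ▸ hle)
          simp [hχ, h, h2]
        · by_cases h2 : z u = Mx <;> simp [hχ, h, h2]
      refine ⟨hχm, ?_⟩
      by_cases h : z u = Mx
      · have : z' u = V₂ := by simp [hz', hχ, h]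
        rw [this]; exact hz'le v
      · have h2 : z v ≠ Mx := fun hc => h (le_antisymm (hub u) (hc ▸ hle))
        simp [hz', hχ, h, h2]; exact hle
    have main : ∀ u v, z v ≤ z u →
        |z u - z v| = |z' u - z' v| + (Mx - V₂) * |χ u - χ v| := by
      intro u v hle
      obtain ⟨hχm, hz'm⟩ := hmono u v hle
      rw [abs_of_nonneg (sub_nonneg.2 hle), abs_of_nonneg (sub_nonneg.2 hz'm),
        abs_of_nonneg (sub_nonneg.2 hχm)]
      simp only [hz']; ring
    intro u v
    rcases le_total (z v) (z u) with h | h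
    · exact main u v h
    · rw [abs_sub_comm (z u), abs_sub_comm (z' u) (z' v), abs_sub_comm (χ u)]
      exact main v u h
  · -- card decreases
    apply lt_of_le_of_lt (Finset.card_le_card ?_)
      (Finset.card_erase_lt_of_mem (Finset.max'_mem _ himg))
    intro t ht
    obtain ⟨u, _, rfl⟩ := Finset.mem_image.1 ht
    by_cases h : z u = Mx
    · rw [if_pos h, h]
      have : Mx - (Mx - V₂) * 1 = V₂ := by ring
      rw [this]; exact hV₂mem
    · simp only [if_neg h, mul_zero, sub_zero]
      exact Finset.mem_erase.2 ⟨h, Finset.mem_image_of_mem _ (Finset.mem_univ _)⟩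
  · intro hi hhi u
    have hMxhi : Mx ≤ hi := by rw [hMxdef, ← huM]; exact hhi uM
    by_cases h : z u = Mx
    · simp only [if_pos h, h, if_true, mul_one]; linarith
    · simp only [if_neg h, mul_zero, sub_zero]
      have := hEle u h; linarith
  · intro lo hlo u
    by_cases h : z u = Mx
    · simp only [if_pos h, h, if_true, mul_one]
      have := hlo u₂; rw [hu₂] at this; linarith
    · simp only [if_neg h, mul_zero, sub_zero]; exact hlo u

lemma keyLem (g : Fin w → Bool → Fin w)
    (hreg : ∀ v : Fin w,
      (Finset.univ.filter fun p : Fin w × Bool => g p.1 p.2 = v).card = 2) :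
    ∀ n : ℕ, ∀ z : Fin w → ℝ, (Finset.univ.image z).card ≤ n →
    (∑ u : Fin w, |z (g u false) - z (g u true)|) +
      ∑ u : Fin w, ∑ v : Fin w,
        |(z (g u false) + z (g u true))/2 - (z (g v false) + z (g v true))/2|
      ≤ ∑ u : Fin w, ∑ v : Fin w, |z u - z v| := by
  intro n
  induction n with
  | zero =>
    intro z hcard
    have : (Finset.univ : Finset (Fin w)) = ∅ :=
      Finset.image_eq_empty.1 (Finset.card_eq_zero.1 (Nat.le_zero.1 hcard))
    rw [this]
    simp
  | succ n ih =>
    intro z hcard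
    by_cases hc : ∀ u v : Fin w, z u = z v
    · have h1 : (∑ u : Fin w, |z (g u false) - z (g u true)|) = 0 :=
        Finset.sum_eq_zero fun u _ => by rw [hc (g u false) (g u true)]; simp
      have h2 : (∑ u : Fin w, ∑ v : Fin w,
          |(z (g u false) + z (g u true))/2 - (z (g v false) + z (g v true))/2|) = 0 :=
        Finset.sum_eq_zero fun u _ => Finset.sum_eq_zero fun v _ => by
          rw [hc (g u false) (g v false), hc (g u true) (g v true)]; simp
      rw [h1, h2]
      have : (0:ℝ) ≤ ∑ u : Fin w, ∑ v : Fin w, |z u - z v| :=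
        Finset.sum_nonneg fun u _ => Finset.sum_nonneg fun v _ => abs_nonneg _
      linarith
    · push_neg at hc
      obtain ⟨z', χ, δ, hδ, h01, hz, habs, hcard', _, _⟩ := decomp z hc
      have hcn : (Finset.univ.image z').card ≤ n := by omega
      have ih' := ih z' hcn
      have hD := keyD g hreg χ h01
      -- term1 decomposition
      have e1 : (∑ u : Fin w, |z (g u false) - z (g u true)|)
          = (∑ u : Fin w, |z' (g u false) - z' (g u true)|)
            + δ * ∑ u : Fin w, |χ (g u false) - χ (g u true)| := by
        rw [Finset.mul_sum, ← Finset.sum_add_distrib]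
        exact Finset.sum_congr rfl fun u _ => habs _ _
      -- term2 decomposition (inequality)
      have e2 : (∑ u : Fin w, ∑ v : Fin w,
            |(z (g u false) + z (g u true))/2 - (z (g v false) + z (g v true))/2|)
          ≤ (∑ u : Fin w, ∑ v : Fin w,
              |(z' (g u false) + z' (g u true))/2 - (z' (g v false) + z' (g v true))/2|)
            + δ * ∑ u : Fin w, ∑ v : Fin w,
              |(χ (g u false) + χ (g u true))/2 - (χ (g v false) + χ (g v true))/2| := by
        have hpt : ∀ u v : Fin w,
            |(z (g u false) + z (g u true))/2 - (z (g v false) + z (g v true))/2|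
              ≤ |(z' (g u false) + z' (g u true))/2 - (z' (g v false) + z' (g v true))/2|
                + δ * |(χ (g u false) + χ (g u true))/2 - (χ (g v false) + χ (g v true))/2| := by
          intro u v
          have he : (z (g u false) + z (g u true))/2 - (z (g v false) + z (g v true))/2
              = ((z' (g u false) + z' (g u true))/2 - (z' (g v false) + z' (g v true))/2)
                + δ * ((χ (g u false) + χ (g u true))/2 - (χ (g v false) + χ (g v true))/2) := by
            rw [hz (g u false), hz (g u true), hz (g v false), hz (g v true)]; ring
          rw [he]
          refine (abs_add_le _ _).trans ?_
          rw [abs_mul, abs_of_pos hδ]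
        calc (∑ u : Fin w, ∑ v : Fin w,
              |(z (g u false) + z (g u true))/2 - (z (g v false) + z (g v true))/2|)
            ≤ ∑ u : Fin w, ∑ v : Fin w,
                (|(z' (g u false) + z' (g u true))/2 - (z' (g v false) + z' (g v true))/2|
                  + δ * |(χ (g u false) + χ (g u true))/2 - (χ (g v false) + χ (g v true))/2|) :=
              Finset.sum_le_sum fun u _ => Finset.sum_le_sum fun v _ => hpt u v
          _ = _ := by
              simp only [Finset.sum_add_distrib, ← Finset.mul_sum]
      -- RHS decomposition
      have e3 : (∑ u : Fin w, ∑ v : Fin w, |z u - z v|)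
          = (∑ u : Fin w, ∑ v : Fin w, |z' u - z' v|)
            + δ * ∑ u : Fin w, ∑ v : Fin w, |χ u - χ v| := by
        simp only [Finset.mul_sum, ← Finset.sum_add_distrib]
        exact Finset.sum_congr rfl fun u _ => Finset.sum_congr rfl fun v _ => habs u v
      have hsc : δ * ((∑ u : Fin w, |χ (g u false) - χ (g u true)|) +
            ∑ u : Fin w, ∑ v : Fin w,
              |(χ (g u false) + χ (g u true))/2 - (χ (g v false) + χ (g v true))/2|)
          ≤ δ * ∑ u : Fin w, ∑ v : Fin w, |χ u - χ v| :=
        mul_le_mul_of_nonneg_left hD hδ.le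
      rw [mul_add] at hsc
      linarith

lemma phi_aux :
    ∀ n : ℕ, ∀ (z : Fin w → ℝ) (lo hi : ℝ), (Finset.univ.image z).card ≤ n →
      lo ≤ hi → (∀ u, lo ≤ z u) → (∀ u, z u ≤ hi) →
      ∑ u : Fin w, ∑ v : Fin w, |z u - z v| ≤ (w : ℝ)^2 / 2 * (hi - lo) := by
  intro n
  induction n with
  | zero =>
    intro z lo hi hcard hlohi _ _
    have huniv : (Finset.univ : Finset (Fin w)) = ∅ :=
      Finset.image_eq_empty.1 (Finset.card_eq_zero.1 (Nat.le_zero.1 hcard))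
    rw [huniv]
    simp only [Finset.sum_empty]
    have h1 : (0:ℝ) ≤ hi - lo := by linarith
    positivity
  | succ n ih =>
    intro z lo hi hcard hlohi hlo hhi
    by_cases hc : ∀ u v : Fin w, z u = z v
    · have h2 : (∑ u : Fin w, ∑ v : Fin w, |z u - z v|) = 0 :=
        Finset.sum_eq_zero fun u _ => Finset.sum_eq_zero fun v _ => by rw [hc u v]; simp
      rw [h2]
      have h1 : (0:ℝ) ≤ hi - lo := by linarith
      positivity
    · push_neg at hc
      obtain ⟨u₀, v₀, hne₀⟩ := hc
      obtain ⟨z', χ, δ, hδ, h01, hz, habs, hcard', hhi', hlo'⟩ := decomp z ⟨u₀, v₀, hne₀⟩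
      have hcn : (Finset.univ.image z').card ≤ n := by omega
      have hlo'' := hlo' lo hlo
      have hhi'' := hhi' hi hhi
      have hlh : lo ≤ hi - δ := le_trans (hlo'' u₀) (hhi'' u₀)
      have ih' := ih z' lo (hi - δ) hcn hlh hlo'' hhi''
      -- Φχ ≤ w²/2
      have hχsum : ∑ u : Fin w, ∑ v : Fin w, |χ u - χ v| ≤ (w:ℝ)^2 / 2 := by
        rw [sum01 χ h01]
        have hc0 : (0:ℝ) ≤ ∑ u, χ u :=
          Finset.sum_nonneg fun u _ => by rcases h01 u with h | h <;> rw [h] <;> norm_num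
        nlinarith [sq_nonneg ((w:ℝ) - 2 * ∑ u, χ u)]
      have e3 : (∑ u : Fin w, ∑ v : Fin w, |z u - z v|)
          = (∑ u : Fin w, ∑ v : Fin w, |z' u - z' v|)
            + δ * ∑ u : Fin w, ∑ v : Fin w, |χ u - χ v| := by
        simp only [Finset.mul_sum, ← Finset.sum_add_distrib]
        exact Finset.sum_congr rfl fun u _ => Finset.sum_congr rfl fun v _ => habs u v
      have hsc : δ * (∑ u : Fin w, ∑ v : Fin w, |χ u - χ v|) ≤ δ * ((w:ℝ)^2 / 2) :=
        mul_le_mul_of_nonneg_left hχsum hδ.le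
      nlinarith [ih', hsc, e3]

lemma rwMat_mulVec (B : ℕ → Fin w → Bool → Fin w) (i : ℕ) (z : Fin w → ℝ) (u : Fin w) :
    (rwMat B i *ᵥ z) u = (z (B i u false) + z (B i u true)) / 2 := by
  have h : ∀ v, rwMat B i u v * z v
      = ((if B i u false = v then z v else 0) + (if B i u true = v then z v else 0)) / 2 := by
    intro v; unfold rwMat; split_ifs <;> ring
  show ∑ v, rwMat B i u v * z v = _
  rw [Finset.sum_congr rfl fun v _ => h v]
  simp only [← Finset.sum_div, Finset.sum_add_distrib, Finset.sum_ite_eq,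
    Finset.mem_univ, if_true]

lemma rwProd_self (B : ℕ → Fin w → Bool → Fin w) (r : ℕ) : rwProd B r r = 1 := by
  unfold rwProd; simp

lemma rwProd_step (B : ℕ → Fin w → Bool → Fin w) {ℓ r : ℕ} (h : ℓ < r) :
    rwProd B ℓ r = rwMat B (ℓ + 1) * rwProd B (ℓ + 1) r := by
  unfold rwProd
  have h1 : r - ℓ = (r - (ℓ + 1)) + 1 := by omega
  rw [h1, List.range_succ_eq_map, List.map_cons, List.prod_cons, List.map_map]
  have h2 : ((fun i => rwMat B (ℓ + i + 1)) ∘ Nat.succ) = fun i => rwMat B (ℓ + 1 + i + 1) := by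
    funext i
    have h3 : ℓ + Nat.succ i + 1 = ℓ + 1 + i + 1 := by omega
    simp only [Function.comp, h3]
  rw [h2]

lemma layerWeight_eq (B : ℕ → Fin w → Bool → Fin w) (i : ℕ) (z : Fin w → ℝ) :
    layerWeight B i z = ∑ u : Fin w, |z (B i u false) - z (B i u true)| := by
  unfold layerWeight
  apply Finset.sum_congr rfl
  intro u _
  rw [Fintype.sum_bool, rwMat_mulVec, add_comm]
  exact abs_midpoint _ _

lemma tele (B : ℕ → Fin w → Bool → Fin w)
    (hreg : ∀ (i : ℕ) (v : Fin w),
      (Finset.univ.filter fun p : Fin w × Bool => B i p.1 p.2 = v).card = 2)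
    (r : ℕ) (y : Fin w → ℝ) :
    ∀ d ℓ : ℕ, ℓ + d = r →
    totalWeight B ℓ r y +
      ∑ u : Fin w, ∑ v : Fin w, |(rwProd B ℓ r *ᵥ y) u - (rwProd B ℓ r *ᵥ y) v|
      ≤ ∑ u : Fin w, ∑ v : Fin w, |y u - y v| := by
  intro d
  induction d with
  | zero =>
    intro ℓ h
    have : ℓ = r := by omega
    subst this
    simp [totalWeight, rwProd_self, Matrix.one_mulVec]
  | succ d ih =>
    intro ℓ h
    have hlr : ℓ < r := by omega
    set z : Fin w → ℝ := rwProd B (ℓ + 1) r *ᵥ y with hzdef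
    have hms : rwProd B ℓ r *ᵥ y = rwMat B (ℓ + 1) *ᵥ z := by
      rw [rwProd_step B hlr, ← Matrix.mulVec_mulVec]
    have hsplit : totalWeight B ℓ r y
        = layerWeight B (ℓ + 1) z + totalWeight B (ℓ + 1) r y := by
      unfold totalWeight
      have hIoc : Finset.Ioc ℓ r = insert (ℓ + 1) (Finset.Ioc (ℓ + 1) r) := by
        ext i; simp only [Finset.mem_Ioc, Finset.mem_insert]; omega
      rw [hIoc, Finset.sum_insert (by simp only [Finset.mem_Ioc]; omega)]
    have hkey := keyLem (B (ℓ + 1)) (hreg (ℓ + 1)) (Finset.univ.image z).card z le_rfl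
    rw [← layerWeight_eq] at hkey
    have hmid : ∀ u : Fin w, (z (B (ℓ+1) u false) + z (B (ℓ+1) u true))/2
        = (rwProd B ℓ r *ᵥ y) u := by
      intro u; rw [hms, rwMat_mulVec]
    have hkey2 : layerWeight B (ℓ + 1) z +
        ∑ u : Fin w, ∑ v : Fin w, |(rwProd B ℓ r *ᵥ y) u - (rwProd B ℓ r *ᵥ y) v|
        ≤ ∑ u : Fin w, ∑ v : Fin w, |z u - z v| := by
      calc layerWeight B (ℓ + 1) z +
            ∑ u : Fin w, ∑ v : Fin w, |(rwProd B ℓ r *ᵥ y) u - (rwProd B ℓ r *ᵥ y) v|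
          = layerWeight B (ℓ + 1) z + ∑ u : Fin w, ∑ v : Fin w,
              |(z (B (ℓ+1) u false) + z (B (ℓ+1) u true))/2
                - (z (B (ℓ+1) v false) + z (B (ℓ+1) v true))/2| := by
            congr 1
            exact Finset.sum_congr rfl fun u _ => Finset.sum_congr rfl fun v _ => by
              rw [hmid u, hmid v]
        _ ≤ _ := hkey
    have ih' := ih (ℓ + 1) (by omega)
    rw [hsplit]
    linarith

/-- Weight bound for regular ROBPs (Braverman–Rao–Raz–Yehudayoff):
`W(ℓ,r,y) ≤ w² ‖y‖_∞`.  Here `‖·‖` on `Fin w → ℝ` is the sup (ℓ∞) norm. -/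
theorem stmt_17 (B : ℕ → Fin w → Bool → Fin w)
    (hreg : ∀ (i : ℕ) (v : Fin w),
      (Finset.univ.filter fun p : Fin w × Bool => B i p.1 p.2 = v).card = 2)
    (ℓ r : ℕ) (hlr : ℓ < r) (y : Fin w → ℝ) :
    totalWeight B ℓ r y ≤ (w : ℝ) ^ 2 * ‖y‖ := by
  have h1 := tele B hreg r y (r - ℓ) ℓ (by omega)
  have hz0 : (0:ℝ) ≤ ∑ u : Fin w, ∑ v : Fin w,
      |(rwProd B ℓ r *ᵥ y) u - (rwProd B ℓ r *ᵥ y) v| :=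
    Finset.sum_nonneg fun u _ => Finset.sum_nonneg fun v _ => abs_nonneg _
  have hbd : ∀ u : Fin w, -‖y‖ ≤ y u ∧ y u ≤ ‖y‖ := by
    intro u
    have h := norm_le_pi_norm y u
    rw [Real.norm_eq_abs] at h
    exact abs_le.1 h
  have h2 : (∑ u : Fin w, ∑ v : Fin w, |y u - y v|)
      ≤ (w:ℝ)^2 / 2 * (‖y‖ - (-‖y‖)) :=
    phi_aux (Finset.univ.image y).card y (-‖y‖) ‖y‖ le_rfl
      (by linarith [norm_nonneg y]) (fun u => (hbd u).1) (fun u => (hbd u).2)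
  have : (w:ℝ)^2 / 2 * (‖y‖ - (-‖y‖)) = (w:ℝ)^2 * ‖y‖ := by ring
  linarith
end
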